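/- arXiv:1002.1400 — 3 statements merged into one kernel-verified Lean document; each statement's English description precedes it below -/
import Mathlib

section
/- For positive integers n, s and for 0 < r < n, the coefficient of T^k in (1-T)^r · ∑_{j≥s} C(n+j-1, j) T^j equals: C(n+s-1, s) if k = s; C(n+k-1-r, k) + (-1)^{k-1} ∑_{j=0}^{s-1} (-1)^j C(r, k-j) C(n+j-1, j) if s+1 ≤ k ≤ r+s-1; and C(n+k-1-r, k) if k ≥ r+s; and 0 if k < s. -/
/-!
The series `∑_{j ≥ s} C(n+j-1, j) T^j` is `(1 - T)^{-n}` minus its truncation below degree `s`,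
and also `T^s` times a power series. The second form shows that the coefficients in degree `< s`
vanish and that the coefficient in degree `s` is `C(n+s-1, s)`. In degree `k ≥ s`, the first form
gives `(1 - T)^r (1 - T)^{-n} = (1 - T)^{-(n-r)}`, with coefficient `C(n+k-1-r, k)`, minus the
finite correction `∑_{j<s} (-1)^{k-j} C(r, k-j) C(n+j-1, j)`, which vanishes once `k ≥ r + s`.
-/

open PowerSeries Finset

namespace PowerSeries

variable {R : Type*} [CommRing R]

theorem coeff_one_sub_X_pow (r i : ℕ) :
    coeff i ((1 - X : R⟦X⟧) ^ r) = (-1) ^ i * r.choose i := by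
  have h : (1 - X : R⟦X⟧) ^ r = rescale (-1) (((1 + Polynomial.X) ^ r : Polynomial R) : R⟦X⟧) := by
    simp [rescale_X, sub_eq_add_neg]
  rw [h, coeff_rescale, Polynomial.coeff_coe, Polynomial.coeff_one_add_X_pow]

theorem mk_eq_sum_add_mk_ite (f : ℕ → R) (s : ℕ) :
    mk f = ∑ j ∈ range s, C (f j) * X ^ j + mk fun j => if s ≤ j then f j else 0 := by
  ext k
  simp only [map_add, map_sum, coeff_C_mul_X_pow, coeff_mk, sum_ite_eq, mem_range]
  split_ifs <;> simp <;> omega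

theorem mk_ite_eq_X_pow_mul (f : ℕ → R) (s : ℕ) :
    (mk fun j => if s ≤ j then f j else 0) = X ^ s * mk fun j => f (j + s) := by
  ext k
  rw [coeff_X_pow_mul', coeff_mk, coeff_mk]
  split_ifs with h
  · rw [Nat.sub_add_cancel h]
  · rfl

variable (p : R⟦X⟧) (f : ℕ → R) {s k : ℕ}

theorem coeff_mul_mk_ite_of_lt (hk : k < s) :
    coeff k (p * mk fun j => if s ≤ j then f j else 0) = 0 := by
  rw [mk_ite_eq_X_pow_mul, mul_left_comm, coeff_X_pow_mul', if_neg hk.not_ge]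

theorem coeff_mul_mk_ite_self :
    coeff s (p * mk fun j => if s ≤ j then f j else 0) = constantCoeff p * f s := by
  rw [mk_ite_eq_X_pow_mul, mul_left_comm, coeff_X_pow_mul', if_pos le_rfl, Nat.sub_self,
    coeff_zero_eq_constantCoeff_apply, map_mul, constantCoeff_mk, zero_add]

theorem coeff_mul_mk_ite_of_le (hk : s ≤ k) :
    coeff k (p * mk fun j => if s ≤ j then f j else 0) =
      coeff k (p * mk f) - ∑ j ∈ range s, f j * coeff (k - j) p := by
  have hsplit := congrArg (fun q => coeff k (p * q)) (mk_eq_sum_add_mk_ite f s)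
  simp only [mul_add, mul_sum, map_add, map_sum] at hsplit
  have hpoly : ∀ j ∈ range s, coeff k (p * (C (f j) * X ^ j)) = f j * coeff (k - j) p := by
    intro j hj
    rw [mul_left_comm, ← mul_assoc, coeff_mul_X_pow', if_pos (by grind), coeff_C_mul]
  rw [hsplit, sum_congr rfl hpoly, add_sub_cancel_left]

theorem mk_choose_eq_invOneSubPow {n : ℕ} (hn : 0 < n) :
    (mk fun j => ((n + j - 1).choose j : R)) = (invOneSubPow R n).val := by
  rw [invOneSubPow_val_eq_mk_sub_one_add_choose_of_pos R n hn]
  ext j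
  rw [coeff_mk, coeff_mk, Nat.choose_symm_add, Nat.sub_add_comm hn]

theorem coeff_one_sub_X_pow_mul_mk_choose {n r : ℕ} (hrn : r < n) (k : ℕ) :
    coeff k ((1 - X : R⟦X⟧) ^ r * mk fun j => ((n + j - 1).choose j : R)) =
      (n + k - 1 - r).choose k := by
  rw [mk_choose_eq_invOneSubPow (by omega), ← Nat.sub_add_cancel hrn.le,
    one_sub_pow_mul_invOneSubPow_val_add_eq_invOneSubPow_val,
    ← mk_choose_eq_invOneSubPow (by omega), coeff_mk]
  congr 2
  omega

end PowerSeries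

theorem stmt_6_general (n s r : ℕ) (hrn : r < n) (k : ℕ) :
    (k = s →
      (PowerSeries.coeff (R := ℤ) k) ((1 - PowerSeries.X) ^ r *
          PowerSeries.mk fun j => if s ≤ j then ((n + j - 1).choose j : ℤ) else 0) =
        (n + s - 1).choose s) ∧
    (s + 1 ≤ k → k ≤ r + s - 1 →
      (PowerSeries.coeff (R := ℤ) k) ((1 - PowerSeries.X) ^ r *
          PowerSeries.mk fun j => if s ≤ j then ((n + j - 1).choose j : ℤ) else 0) =
        ((n + k - 1 - r).choose k : ℤ) +
          (-1 : ℤ) ^ (k - 1) *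
            ∑ j ∈ Finset.range s, (-1 : ℤ) ^ j * r.choose (k - j) * (n + j - 1).choose j) ∧
    (r + s ≤ k →
      (PowerSeries.coeff (R := ℤ) k) ((1 - PowerSeries.X) ^ r *
          PowerSeries.mk fun j => if s ≤ j then ((n + j - 1).choose j : ℤ) else 0) =
        (n + k - 1 - r).choose k) ∧
    (k < s →
      (PowerSeries.coeff (R := ℤ) k) ((1 - PowerSeries.X) ^ r *
          PowerSeries.mk fun j => if s ≤ j then ((n + j - 1).choose j : ℤ) else 0) = 0) := by
  refine ⟨?_, ?_, ?_, ?_⟩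
  · rintro rfl
    rw [coeff_mul_mk_ite_self, ← coeff_zero_eq_constantCoeff_apply, coeff_one_sub_X_pow]
    simp
  · intro hk _
    rw [coeff_mul_mk_ite_of_le _ _ (by omega), coeff_one_sub_X_pow_mul_mk_choose hrn,
      sub_eq_add_neg, mul_sum, ← sum_neg_distrib]
    congr 1
    refine sum_congr rfl fun j hj => ?_
    have hsign : (-1 : ℤ) ^ (k - j) = -((-1) ^ (k - 1) * (-1) ^ j) :=
      calc (-1 : ℤ) ^ (k - j) = (-1) ^ (k - j + 2 * j) := by simp [pow_add, pow_mul]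
        _ = (-1) ^ (k - 1 + j + 1) := by grind
        _ = -((-1) ^ (k - 1) * (-1) ^ j) := by ring
    rw [coeff_one_sub_X_pow, hsign]
    ring
  · intro hk
    rw [coeff_mul_mk_ite_of_le _ _ (by omega), coeff_one_sub_X_pow_mul_mk_choose hrn,
      sum_eq_zero, sub_zero]
    intro j hj
    rw [coeff_one_sub_X_pow, Nat.choose_eq_zero_of_lt (n := r) (by grind)]
    simp
  · exact coeff_mul_mk_ite_of_lt _ _

theorem stmt_6 (n s r : ℕ) (hn : 0 < n) (hs : 0 < s) (hr0 : 0 < r) (hrn : r < n) (k : ℕ) :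
    (k = s →
      (PowerSeries.coeff (R := ℤ) k) ((1 - PowerSeries.X) ^ r *
          PowerSeries.mk fun j => if s ≤ j then ((n + j - 1).choose j : ℤ) else 0) =
        (n + s - 1).choose s) ∧
    (s + 1 ≤ k → k ≤ r + s - 1 →
      (PowerSeries.coeff (R := ℤ) k) ((1 - PowerSeries.X) ^ r *
          PowerSeries.mk fun j => if s ≤ j then ((n + j - 1).choose j : ℤ) else 0) =
        ((n + k - 1 - r).choose k : ℤ) +
          (-1 : ℤ) ^ (k - 1) *
            ∑ j ∈ Finset.range s, (-1 : ℤ) ^ j * r.choose (k - j) * (n + j - 1).choose j) ∧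
    (r + s ≤ k →
      (PowerSeries.coeff (R := ℤ) k) ((1 - PowerSeries.X) ^ r *
          PowerSeries.mk fun j => if s ≤ j then ((n + j - 1).choose j : ℤ) else 0) =
        (n + k - 1 - r).choose k) ∧
    (k < s →
      (PowerSeries.coeff (R := ℤ) k) ((1 - PowerSeries.X) ^ r *
          PowerSeries.mk fun j => if s ≤ j then ((n + j - 1).choose j : ℤ) else 0) = 0) :=
  stmt_6_general n s r hrn k
end

section
/- For all real numbers s ≥ 2, we have log s + ψ(3) - ψ(s+3) > 0, where ψ is the digamma function. -/
/-- The digamma function `ψ = Γ'/Γ`, as the derivative of `log ∘ Γ`. -/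
noncomputable def digamma (x : ℝ) : ℝ := deriv (fun y : ℝ => Real.log (Real.Gamma y)) x

/-!
Convexity of `log ∘ Γ` bounds its derivative by the slope over `[x, x + 1]`, which is `log x`;
hence `ψ(s + 3) - log s ≤ log (1 + 3 / s) ≤ log (5 / 2)`. Since `ψ(3) = H₂ - γ`, it remains to
show `γ < H₂ - log (5 / 2)`. This holds because `Hₙ - log (n + 1/2)` decreases strictly to `γ`,
each step being the inequality `2 / (2a + 1) < log (1 + 1/a)`: the left side is the first term
of the series of `log (1 + 1/a)` in powers of `1 / (2a + 1)`.
-/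

open Real Filter Topology

lemma two_div_lt_log_one_add_inv {a : ℝ} (ha : 0 < a) : 2 / (2 * a + 1) < log (1 + a⁻¹) := by
  have hsum :=
    sum_le_hasSum (Finset.range 2) (fun k _ => by positivity) (hasSum_log_one_add_inv ha)
  norm_num [Finset.sum_range_succ] at hsum
  have : 0 < ((2 * a + 1) ^ 3)⁻¹ := by positivity
  rw [div_eq_mul_inv]
  linarith

lemma strictAnti_harmonic_sub_log_add_half :
    StrictAnti fun n : ℕ => (harmonic n : ℝ) - log (n + 1 / 2) := by
  refine strictAnti_nat_of_succ_lt fun n => ?_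
  have hpos : (0 : ℝ) < n + 1 / 2 := by positivity
  have hstep := two_div_lt_log_one_add_inv hpos
  rw [show 2 / (2 * ((n : ℝ) + 1 / 2) + 1) = ((n : ℝ) + 1)⁻¹ by field_simp; ring,
    show (1 : ℝ) + ((n : ℝ) + 1 / 2)⁻¹ = (n + 1 + 1 / 2) / (n + 1 / 2) by field_simp; ring,
    log_div (by positivity) hpos.ne'] at hstep
  push_cast [harmonic_succ]
  linarith

lemma tendsto_harmonic_sub_log_add_half :
    Tendsto (fun n : ℕ => (harmonic n : ℝ) - log (n + 1 / 2)) atTop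
      (𝓝 eulerMascheroniConstant) := by
  have hcorr := (tendsto_log_comp_add_sub_log (1 / 2)).comp tendsto_natCast_atTop_atTop
  simpa using tendsto_harmonic_sub_log.sub hcorr

lemma eulerMascheroniConstant_lt_harmonic_sub_log_add_half (n : ℕ) :
    eulerMascheroniConstant < harmonic n - log (n + 1 / 2) :=
  (strictAnti_harmonic_sub_log_add_half.antitone.le_of_tendsto
    tendsto_harmonic_sub_log_add_half (n + 1)).trans_lt
    (strictAnti_harmonic_sub_log_add_half n.lt_succ_self)

lemma digamma_nat_add_one (n : ℕ) :
    digamma (n + 1) = harmonic n - eulerMascheroniConstant := by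
  have hΓ := Gamma_nat_eq_factorial n
  have hderiv := ((hasDerivAt_Gamma_nat n).log (by rw [hΓ]; positivity)).deriv
  rw [digamma, hderiv, hΓ]
  field_simp
  ring

lemma digamma_le_log {x : ℝ} (hx : 0 < x) : digamma x ≤ log x := by
  have hdiff : DifferentiableAt ℝ (log ∘ Gamma) x :=
    (differentiableAt_Gamma fun m => by linarith [(m.cast_nonneg : (0 : ℝ) ≤ m)]).log
      (Gamma_pos_of_pos hx).ne'
  have hslope := convexOn_log_Gamma.deriv_le_slope hx (Set.mem_Ioi.2 (by linarith))
    (lt_add_one x) hdiff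
  rwa [slope_def_field, Function.comp_apply, Function.comp_apply, Gamma_add_one hx.ne',
    log_mul hx.ne' (Gamma_pos_of_pos hx).ne', add_sub_cancel_left, add_sub_cancel_right,
    div_one] at hslope

lemma log_five_div_two_lt_digamma_three : log (5 / 2) < digamma 3 := by
  have hψ := digamma_nat_add_one 2
  have hγ := eulerMascheroniConstant_lt_harmonic_sub_log_add_half 2
  norm_num at hψ hγ
  linarith

theorem stmt_8 (s : ℝ) (hs : 2 ≤ s) :
    Real.log s + digamma 3 - digamma (s + 3) > 0 := by
  have hs0 : 0 < s := by linarith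
  have hψ := digamma_le_log (show 0 < s + 3 by linarith)
  have hratio : log (s + 3) - log s ≤ log (5 / 2) := by
    rw [← log_div (by linarith) hs0.ne']
    exact log_le_log (by positivity) (by rw [div_le_iff₀ hs0]; linarith)
  linarith [log_five_div_two_lt_digamma_three]
end

section
/- For real n ≥ 1, s ≥ 2 and integer r = ⌈n/(s+1)⌉ with r ≥ 4, we have ψ(n+s-r+2) - ψ(n-r) - (ψ(n+s) - ψ(n)) > 2/(n-r+1) + ((r-2)s+1)/((n-1)(n+s-1)), provided n, s are integers (so that ψ differences are finite sums of reciprocals) and n - r > 0. -/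
open Finset

lemma digamma_add_one {x : ℝ} (hx : 0 < x) : digamma (x + 1) = digamma x + 1 / x := by
  have hΓ : DifferentiableAt ℝ (fun y : ℝ => Real.log (Real.Gamma y)) x :=
    (Real.differentiableAt_Gamma fun m => by linarith [(m.cast_nonneg : (0 : ℝ) ≤ m)]).log
      (Real.Gamma_pos_of_pos hx).ne'
  have hshift : (fun y : ℝ => Real.log (Real.Gamma (y + 1))) =ᶠ[nhds x]
      fun y => Real.log y + Real.log (Real.Gamma y) := by
    filter_upwards [eventually_gt_nhds hx] with y hy
    rw [Real.Gamma_add_one hy.ne', Real.log_mul hy.ne' (Real.Gamma_pos_of_pos hy).ne']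
  have h := hshift.deriv_eq
  rw [deriv_comp_add_const (fun y => Real.log (Real.Gamma y)),
    deriv_fun_add (Real.differentiableAt_log hx.ne') hΓ, Real.deriv_log] at h
  rw [digamma, h, add_comm, one_div, digamma]

lemma digamma_add_nat_sub {x : ℝ} (hx : 0 < x) (m : ℕ) :
    digamma (x + m) - digamma x = ∑ i ∈ range m, 1 / (x + i) := by
  induction m with
  | zero => simp
  | succ m ih =>
    rw [Nat.cast_succ, ← add_assoc, digamma_add_one (by positivity), sum_range_succ, ← ih]
    ring

lemma sum_range_inv_sub_inv_add_one {x : ℝ} (s : ℕ) :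
    ∑ i ∈ range s, (1 / (x + i) - 1 / (x + 1 + i)) = 1 / x - 1 / (x + s) := by
  have h := sum_range_sub' (fun i : ℕ => 1 / (x + i)) s
  push_cast [add_assoc, add_comm (1 : ℝ)] at h ⊢
  simpa using h

lemma mul_inv_sub_inv_le_inv_sub_inv {d y : ℝ} (hd : 1 ≤ d) (hy : d < y) :
    d * (1 / (y - 1) - 1 / y) ≤ 1 / (y - d) - 1 / y := by
  have hy0 : 0 < y := by linarith
  rw [div_sub_div _ _ (by linarith) hy0.ne', div_sub_div _ _ (by linarith) hy0.ne', ← mul_div_assoc]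
  simp only [one_mul, mul_one, sub_sub_cancel]
  gcongr

lemma inv_mul_lt_inv_sub_inv {a b c : ℝ} (hc : 2 < c) (hca : c < a) (hb : 0 ≤ b) :
    1 / ((a - 1) * (a + b - 1)) < 1 / (a - c) - 1 / (a - c + 1) := by
  have hac : 0 < a - c := by linarith
  rw [div_sub_div _ _ hac.ne' (by linarith)]
  simp only [one_mul, mul_one, add_sub_cancel_left]
  gcongr <;> linarith

theorem sum_range_inv_sub_sum_range_inv_gt {a c : ℝ} (hc : 3 ≤ c) (hca : c < a) (s : ℕ) :
    2 / (a - c + 1) + ((c - 2) * s + 1) / ((a - 1) * (a + s - 1)) <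
      ∑ i ∈ range (s + 2), 1 / (a - c + i) - ∑ i ∈ range s, 1 / (a + i) := by
  have hsplit : ∑ i ∈ range (s + 2), 1 / (a - c + i) =
      1 / (a - c) + 1 / (a - c + 1) + ∑ i ∈ range s, 1 / (a - c + 2 + i) := by
    rw [sum_range_succ', sum_range_succ']
    push_cast
    ring_nf
  have htel := sum_range_inv_sub_inv_add_one (x := a - 1) s
  rw [sub_add_cancel, show a - 1 + (s : ℝ) = a + s - 1 by ring] at htel
  have hrhs : ((c - 2) * s + 1) / ((a - 1) * (a + s - 1)) =
      (c - 2) * (1 / (a - 1) - 1 / (a + s - 1)) + 1 / ((a - 1) * (a + s - 1)) := by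
    have : a - 1 ≠ 0 := by linarith
    have : a + s - 1 ≠ 0 := by linarith [(s.cast_nonneg : (0 : ℝ) ≤ s)]
    field_simp
    ring
  have hterm : ∑ i ∈ range s, (c - 2) * (1 / (a - 1 + i) - 1 / (a + i)) ≤
      ∑ i ∈ range s, (1 / (a - c + 2 + i) - 1 / (a + i)) :=
    sum_le_sum fun i _ => by
      rw [show a - 1 + i = a + i - 1 by ring, show a - c + 2 + i = a + i - (c - 2) by ring]
      exact mul_inv_sub_inv_le_inv_sub_inv (by linarith)
        (by linarith [(i.cast_nonneg : (0 : ℝ) ≤ i)])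
  have hgap := inv_mul_lt_inv_sub_inv (b := s) (by linarith) hca s.cast_nonneg
  rw [← mul_sum, htel, sum_sub_distrib] at hterm
  rw [hsplit, hrhs, ← one_add_one_eq_two, add_div]
  linarith

theorem stmt_18_general (n s r : ℕ) (hr4 : 4 ≤ r) (hnr : r < n) :
    digamma (n + s - r + 2) - digamma (n - r : ℕ) - (digamma (n + s) - digamma n) >
      2 / ((n : ℝ) - r + 1) + (((r : ℝ) - 2) * s + 1) / (((n : ℝ) - 1) * (n + s - 1)) := by
  have hr3 : (3 : ℝ) ≤ r := by exact_mod_cast (by omega : 3 ≤ r)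
  have hrn : (r : ℝ) < n := by exact_mod_cast hnr
  rw [Nat.cast_sub hnr.le, show (n : ℝ) + s - r + 2 = n - r + (s + 2 : ℕ) by push_cast; ring,
    digamma_add_nat_sub (by linarith), digamma_add_nat_sub (by linarith)]
  exact sum_range_inv_sub_sum_range_inv_gt hr3 hrn s

theorem stmt_18 (n s r : ℕ) (hn : 1 ≤ n) (hs : 2 ≤ s)
    (hr : r = (n + s) / (s + 1)) (hr4 : 4 ≤ r) (hnr : r < n) :
    digamma (n + s - r + 2) - digamma (n - r : ℕ) - (digamma (n + s) - digamma n) >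
      2 / ((n : ℝ) - r + 1) + (((r : ℝ) - 2) * s + 1) / (((n : ℝ) - 1) * (n + s - 1)) :=
  stmt_18_general n s r hr4 hnr
end
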